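/- Let n ≥ 3 be an integer, u ∈ ℝ^{n−2} a nonzero vector, and λ a nonzero real number. Define X ∈ ℝ^{n×n} by: X(1,l) = −u(l−1) for 2 ≤ l ≤ n−1; X(k,1) = u(k−1) and X(k,n) = λ·u(k−1) for 2 ≤ k ≤ n−1; X(n,l) = −λ·u(l−1) for 2 ≤ l ≤ n−1; and all other entries (in particular X(1,1), X(1,n), X(n,1), X(n,n) and the middle block X(k,l) for 2 ≤ k,l ≤ n−1) equal to 0. Then X is skew-symmetric, X belongs to N(S_{(n,n)}, 2) ∩ M(n,n), and X does not belong to N0(n,n) ∪ N2(n,n). -/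

import Mathlib

open scoped BigOperators
open MeasureTheory

noncomputable section

/-- 1-based access into a vector `u ∈ ℝ^d`, with the convention that
out-of-range indices (including `0` and anything `> d`) give `0`. -/
def pad1 {d : ℕ} (u : Fin d → ℝ) (i : ℕ) : ℝ :=
  if h : 1 ≤ i ∧ i ≤ d then u ⟨i - 1, by omega⟩ else 0

/-- The lifted linear convolution map `S_{(m,n)} : ℝ^{m×n} → ℝ^{m+n-1}`,
summing the entries of a matrix along its anti-diagonals. -/
def liftS (m n : ℕ) (W : Matrix (Fin m) (Fin n) ℝ) : Fin (m + n - 1) → ℝ :=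
  fun l => ∑ k : Fin m, ∑ j : Fin n, if (k : ℕ) + (j : ℕ) = (l : ℕ) then W k j else 0

/-- Linear convolution `x ⋆ y ∈ ℝ^{m+n-1}` of `x ∈ ℝ^m` and `y ∈ ℝ^n`. -/
def conv {m n : ℕ} (x : Fin m → ℝ) (y : Fin n → ℝ) : Fin (m + n - 1) → ℝ :=
  fun l => ∑ k : Fin m, ∑ j : Fin n, if (k : ℕ) + (j : ℕ) = (l : ℕ) then x k * y j else 0

/-- The rank-two null space `N(S_{(m,n)}, 2)`. -/
def rankTwoNull (m n : ℕ) : Set (Matrix (Fin m) (Fin n) ℝ) :=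
  {Q | Q.rank ≤ 2 ∧ liftS m n Q = 0}

/-- The parametrized family `N0(m,n)`:
`Q(k,l) = u(k)·v(l−1) − u(k−1)·v(l)` (1-based, with zero-padding conventions). -/
def N0set (m n : ℕ) : Set (Matrix (Fin m) (Fin n) ℝ) :=
  {Q | ∃ (u : Fin (m - 1) → ℝ) (v : Fin (n - 1) → ℝ),
    ∀ (k : Fin m) (l : Fin n),
      Q k l = pad1 u ((k : ℕ) + 1) * pad1 v (l : ℕ) - pad1 u (k : ℕ) * pad1 v ((l : ℕ) + 1)}

/-- The recursively defined family `N2(m,n)`: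
`Q(k,l) = u₁(k)·v₁(l−1) + u₂(k−1)·v₂(l)` (1-based, with zero-padding conventions),
where `u₁v₁ᵀ + u₂v₂ᵀ ∈ N(S_{(m-1,n-1)}, 2) \ {0}`. -/
def N2set (m n : ℕ) : Set (Matrix (Fin m) (Fin n) ℝ) :=
  {Q | ∃ (u₁ u₂ : Fin (m - 1) → ℝ) (v₁ v₂ : Fin (n - 1) → ℝ),
    (Matrix.of fun i j => u₁ i * v₁ j + u₂ i * v₂ j) ∈ rankTwoNull (m - 1) (n - 1) ∧
    (Matrix.of fun i j => u₁ i * v₁ j + u₂ i * v₂ j) ≠ (0 : Matrix (Fin (m - 1)) (Fin (n - 1)) ℝ) ∧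
    ∀ (k : Fin m) (l : Fin n),
      Q k l = pad1 u₁ ((k : ℕ) + 1) * pad1 v₁ (l : ℕ) + pad1 u₂ (k : ℕ) * pad1 v₂ ((l : ℕ) + 1)}

/-- The exceptional set `M(m,n) = {Q ∈ N(S_{(m,n)}, 2) : Q(m,1) = 0 and Q(1,n) = 0}` (1-based). -/
def Mexc (m n : ℕ) (hm : 0 < m) (hn : 0 < n) : Set (Matrix (Fin m) (Fin n) ℝ) :=
  {Q | Q ∈ rankTwoNull m n ∧ Q ⟨m - 1, by omega⟩ ⟨0, hn⟩ = 0 ∧ Q ⟨0, hm⟩ ⟨n - 1, by omega⟩ = 0}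

/-- Identifiability of the pair `p = (x,y)` with respect to linear convolution
and the constraint set `K`. -/
def Identifiable {m n : ℕ} (K : Set ((Fin m → ℝ) × (Fin n → ℝ)))
    (p : (Fin m → ℝ) × (Fin n → ℝ)) : Prop :=
  ∀ q ∈ K, conv q.1 q.2 = conv p.1 p.2 →
    ∃ α : ℝ, α ≠ 0 ∧ q.1 = α • p.1 ∧ q.2 = (1 / α) • p.2

/-- The quotient set `Q∼(w,d)`: pairs `(w*, γ) ∈ ℝ^{d-1} × [0, 2π)` with
`w(j) = w*(j)·cos γ − w*(j−1)·sin γ` for `1 ≤ j ≤ d` (1-based, zero-padding conventions). -/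
def quotSet (d : ℕ) (w : Fin d → ℝ) : Set ((Fin (d - 1) → ℝ) × ℝ) :=
  {p | p.2 ∈ Set.Ico 0 (2 * Real.pi) ∧
    ∀ j : Fin d, w j = pad1 p.1 ((j : ℕ) + 1) * Real.cos p.2 - pad1 p.1 (j : ℕ) * Real.sin p.2}

/-- Matrices over `ℝ` carry the (product) metric space structure of `ℝ^{m×n}`. -/
instance {m n : ℕ} : MetricSpace (Matrix (Fin m) (Fin n) ℝ) :=
  show MetricSpace (Fin m → Fin n → ℝ) from inferInstance

/-!
`X = v wᵀ - w vᵀ` with `v = (0, u, 0)` and `w = e₁ + λ eₙ`, so `X` is skew-symmetric of rank at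
most two, and a skew-symmetric matrix has vanishing anti-diagonal sums. In a matrix of
`N0(m,n)` or `N2(m,n)` the second summand vanishes on the first row and on the last column, so
these are `u(1) v(l-1)` and `u(k) v(n-1)`: once the corner `Q(1,n) = u(1) v(n-1)` is zero, every
entry of the first row times every entry of the last column is zero. For `X` the corner is zero, but
`X(1,i+1) · X(i+1,n) = -λ u(i)² ≠ 0`.
-/

namespace Matrix

theorem rank_add_le {K m n : Type*} [Field K] [Fintype n] (A B : Matrix m n K) :
    (A + B).rank ≤ A.rank + B.rank :=
  calc (A + B).rank
      ≤ Module.finrank K ↥(LinearMap.range A.mulVecLin ⊔ LinearMap.range B.mulVecLin) := by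
        rw [rank, mulVecLin_add]
        exact Submodule.finrank_mono (LinearMap.range_add_le _ _)
    _ ≤ A.rank + B.rank := Submodule.finrank_add_le_finrank_add_finrank _ _

theorem rank_vecMulVec_sub_vecMulVec_le_two {K m : Type*} [Field K] [Fintype m] (v w : m → K) :
    (vecMulVec v w - vecMulVec w v).rank ≤ 2 := by
  rw [sub_eq_add_neg, ← neg_vecMulVec]
  exact (rank_add_le _ _).trans (add_le_add (rank_vecMulVec_le _ _) (rank_vecMulVec_le _ _))

theorem transpose_vecMulVec_sub_vecMulVec {R m : Type*} [CommRing R] (v w : m → R) :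
    (vecMulVec v w - vecMulVec w v)ᵀ = -(vecMulVec v w - vecMulVec w v) := by
  rw [transpose_sub, transpose_vecMulVec, transpose_vecMulVec, neg_sub]

end Matrix

theorem liftS_eq_zero_of_transpose_eq_neg {m : ℕ} {Q : Matrix (Fin m) (Fin m) ℝ}
    (hQ : Matrix.transpose Q = -Q) : liftS m m Q = 0 := by
  funext l
  have hswap : ∀ k j : Fin m, Q j k = -Q k j := fun k j => by
    simpa using congrFun (congrFun hQ k) j
  have hneg : liftS m m Q l = -liftS m m Q l :=
    calc liftS m m Q l
        = ∑ j : Fin m, ∑ k : Fin m, if (k : ℕ) + j = l then Q k j else 0 := Finset.sum_comm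
      _ = ∑ k : Fin m, ∑ j : Fin m, -(if (k : ℕ) + j = l then Q k j else 0) := by
          refine Finset.sum_congr rfl fun k _ => Finset.sum_congr rfl fun j _ => ?_
          rw [hswap k j, Nat.add_comm (j : ℕ)]
          split_ifs <;> simp
      _ = -liftS m m Q l := by simp only [liftS, Finset.sum_neg_distrib]
  exact self_eq_neg.mp hneg

theorem pad1_zero {d : ℕ} (u : Fin d → ℝ) : pad1 u 0 = 0 := by
  simp [pad1]

theorem pad1_of_lt {d i : ℕ} (u : Fin d → ℝ) (h : d < i) : pad1 u i = 0 :=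
  dif_neg (by omega)

section Border

variable {m n : ℕ} (hm : 0 < m) (hn : 0 < n)

theorem firstRow_mul_lastCol_eq_zero {Q : Matrix (Fin m) (Fin n) ℝ} (a b c d : ℕ → ℝ)
    (hc : c 0 = 0) (hd : d n = 0) (hQ : ∀ k l, Q k l = a (k + 1) * b l + c k * d (l + 1))
    (hcorner : Q ⟨0, hm⟩ ⟨n - 1, by omega⟩ = 0) (k : Fin m) (l : Fin n) :
    Q ⟨0, hm⟩ l * Q k ⟨n - 1, by omega⟩ = 0 := by
  have hrow : ∀ l, Q ⟨0, hm⟩ l = a 1 * b l := fun l => by simp [hQ, hc]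
  have hcol : Q k ⟨n - 1, by omega⟩ = a (k + 1) * b (n - 1) := by
    simp [hQ, Nat.sub_add_cancel hn, hd]
  rw [hrow] at hcorner ⊢
  calc a 1 * b l * Q k ⟨n - 1, by omega⟩ = a 1 * b (n - 1) * (a (k + 1) * b l) := by
        rw [hcol]; ring
    _ = 0 := by rw [hcorner, zero_mul]

theorem firstRow_mul_lastCol_eq_zero_of_mem_N0set_union_N2set {Q : Matrix (Fin m) (Fin n) ℝ}
    (hQ : Q ∈ N0set m n ∪ N2set m n) (hcorner : Q ⟨0, hm⟩ ⟨n - 1, by omega⟩ = 0)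
    (k : Fin m) (l : Fin n) : Q ⟨0, hm⟩ l * Q k ⟨n - 1, by omega⟩ = 0 := by
  have hlast : ∀ v : Fin (n - 1) → ℝ, pad1 v n = 0 := fun v => pad1_of_lt v (by omega)
  rcases hQ with ⟨u, v, hQ⟩ | ⟨u₁, u₂, v₁, v₂, -, -, hQ⟩
  · refine firstRow_mul_lastCol_eq_zero hm hn (pad1 u) (pad1 v) (fun i => -pad1 u i) (pad1 v)
      (by simp [pad1_zero]) (hlast v) (fun k l => ?_) hcorner k l
    rw [hQ, neg_mul, ← sub_eq_add_neg]
  · exact firstRow_mul_lastCol_eq_zero hm hn (pad1 u₁) (pad1 v₁) (pad1 u₂) (pad1 v₂)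
      (pad1_zero u₂) (hlast v₂) hQ hcorner k l

end Border

/-- the explicit bordered matrix `X` built from `u ≠ 0` and `λ ≠ 0` is
skew-symmetric, lies in `N(S_{(n,n)}, 2) ∩ M(n,n)`, and is outside `N0(n,n) ∪ N2(n,n)`. -/
theorem stmt7 (n : ℕ) (hn : 3 ≤ n) (u : Fin (n - 2) → ℝ) (hu : u ≠ 0)
    (lam : ℝ) (hlam : lam ≠ 0) :
    let X : Matrix (Fin n) (Fin n) ℝ := Matrix.of fun k l =>
      if (k : ℕ) = 0 then
        (if h : 1 ≤ (l : ℕ) ∧ (l : ℕ) ≤ n - 2 then -u ⟨(l : ℕ) - 1, by omega⟩ else 0)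
      else if (k : ℕ) = n - 1 then
        (if h : 1 ≤ (l : ℕ) ∧ (l : ℕ) ≤ n - 2 then -(lam * u ⟨(l : ℕ) - 1, by omega⟩) else 0)
      else if (l : ℕ) = 0 then
        (if h : 1 ≤ (k : ℕ) ∧ (k : ℕ) ≤ n - 2 then u ⟨(k : ℕ) - 1, by omega⟩ else 0)
      else if (l : ℕ) = n - 1 then
        (if h : 1 ≤ (k : ℕ) ∧ (k : ℕ) ≤ n - 2 then lam * u ⟨(k : ℕ) - 1, by omega⟩ else 0)
      else 0
    Matrix.transpose X = -X ∧
    X ∈ rankTwoNull n n ∧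
    X ∈ Mexc n n (by omega) (by omega) ∧
    X ∉ N0set n n ∪ N2set n n := by
  intro X
  set v : Fin n → ℝ := fun k => pad1 u k
  set w : Fin n → ℝ := fun k => if (k : ℕ) = 0 then 1 else if (k : ℕ) = n - 1 then lam else 0
  have hX : X = Matrix.vecMulVec v w - Matrix.vecMulVec w v := by
    ext k l
    simp only [X, v, w, pad1, Matrix.of_apply, Matrix.sub_apply, Matrix.vecMulVec_apply]
    split_ifs <;> first | ring1 | (exfalso; omega)
  have hskew : Matrix.transpose X = -X := hX ▸ Matrix.transpose_vecMulVec_sub_vecMulVec _ _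
  have hnull : X ∈ rankTwoNull n n :=
    ⟨hX ▸ Matrix.rank_vecMulVec_sub_vecMulVec_le_two _ _, liftS_eq_zero_of_transpose_eq_neg hskew⟩
  have hcorner : X ⟨0, by omega⟩ ⟨n - 1, by omega⟩ = 0 := by
    simp [X]; omega
  refine ⟨hskew, hnull, ⟨hnull, by simp [X], hcorner⟩, fun hmem => ?_⟩
  obtain ⟨i, hui⟩ : ∃ i, u i ≠ 0 := Function.ne_iff.mp hu
  have hborder := firstRow_mul_lastCol_eq_zero_of_mem_N0set_union_N2set (by omega) (by omega) hmem hcorner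
    ⟨i + 1, by omega⟩ ⟨i + 1, by omega⟩
  have hrow : X ⟨0, by omega⟩ ⟨i + 1, by omega⟩ = -u i := by simp [X]
  have hcol : X ⟨i + 1, by omega⟩ ⟨n - 1, by omega⟩ = lam * u i := by
    simp [X, show (i : ℕ) + 1 ≠ n - 1 by omega, show n - 1 ≠ 0 by omega]
  rw [hrow, hcol] at hborder
  exact mul_ne_zero (neg_ne_zero.mpr hui) (mul_ne_zero hlam hui) hborder
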